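/- Let K ⊆ ℝⁿ be a compact set, f : K → [0,∞) Borel measurable and integrable, ξ a unit vector, and p > 0. Then (∫_K f(x) dx)^{p+1} ≤ 2^p (p+1) · (sup_{s∈ℝ} ∫_{K ∩ {⟨x,ξ⟩=s}} f(x) dx)^p · ∫_K |⟨x,ξ⟩|^p f(x) dx. -/

import Mathlib

/-!
Write `x = s ξ + y` with `y ⊥ ξ`. By Fubini, `∫_K f = ∫ G` and `∫_K |⟨x,ξ⟩|^p f = ∫ |s|^p G(s)`,
where `G(s)` is the `(n-1)`-dimensional Lebesgue integral of `f` over `K ∩ {⟨x,ξ⟩ = s}`; since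
Lebesgue measure is dominated by the Hausdorff measure,
`G ≤ M := sup_s ∫_{K ∩ {⟨x,ξ⟩ = s}} f dμH`. The one-dimensional inequality for `0 ≤ G ≤ M` is
a bathtub argument: with `∫ G = 2Ma`, `(|t|^p - a^p) (G(t) - M 1_{[-a,a]}(t)) ≥ 0` pointwise,
and integrating gives `∫ |t|^p G ≥ 2 M a^{p+1} / (p+1)`.
-/

open MeasureTheory Set
open scoped ENNReal RealInnerProductSpace

theorem ENNReal.mul_add_mul_le_mul_add_mul {a b c d : ℝ≥0∞} (hab : a ≤ b) (hcd : c ≤ d) :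
    a * d + b * c ≤ a * c + b * d := by
  obtain ⟨e, rfl⟩ := exists_add_of_le hab
  calc a * d + (a + e) * c = a * c + a * d + e * c := by ring
    _ ≤ a * c + a * d + e * d := by gcongr
    _ = a * c + (a + e) * d := by ring

theorem integral_Icc_abs_rpow {a p : ℝ} (ha : 0 ≤ a) (hp : 0 ≤ p) :
    ∫ t in Icc (-a) a, |t| ^ p = 2 * a ^ (p + 1) / (p + 1) := by
  have hcont : Continuous fun t : ℝ => |t| ^ p := continuous_abs.rpow_const fun _ => Or.inr hp
  have half : ∫ t in (0 : ℝ)..a, |t| ^ p = a ^ (p + 1) / (p + 1) := by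
    rw [intervalIntegral.integral_congr (g := fun t => t ^ p) fun t ht => by
      rw [uIcc_of_le ha] at ht; simp only [abs_of_nonneg ht.1]]
    rw [integral_rpow (Or.inl (by linarith)), Real.zero_rpow (by linarith), sub_zero]
  have neg_half : ∫ t in (-a)..0, |t| ^ p = ∫ t in (0 : ℝ)..a, |t| ^ p := by
    simpa using (intervalIntegral.integral_comp_neg (a := 0) (b := a) fun t => |t| ^ p).symm
  rw [integral_Icc_eq_integral_Ioc, ← intervalIntegral.integral_of_le (by linarith),
    ← intervalIntegral.integral_add_adjacent_intervals (b := 0)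
      (hcont.intervalIntegrable _ _) (hcont.intervalIntegrable _ _), neg_half, half]
  ring

theorem lintegral_Icc_abs_rpow {a p : ℝ} (ha : 0 ≤ a) (hp : 0 ≤ p) :
    ∫⁻ t in Icc (-a) a, ENNReal.ofReal (|t| ^ p) = ENNReal.ofReal (2 * a ^ (p + 1) / (p + 1)) := by
  rw [← integral_Icc_abs_rpow ha hp, ofReal_integral_eq_lintegral_ofReal]
  · exact (continuous_abs.rpow_const fun _ => Or.inr hp).continuousOn.integrableOn_Icc
  · exact Filter.Eventually.of_forall fun t => by positivity

theorem lintegral_bathtub {G : ℝ → ℝ≥0∞} (hG : Measurable G) {M : ℝ≥0∞} (hGM : ∀ t, G t ≤ M)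
    {a p : ℝ} (ha : 0 ≤ a) (hp : 0 ≤ p) :
    ENNReal.ofReal (a ^ p) * (∫⁻ t, G t) + M * ENNReal.ofReal (2 * a ^ (p + 1) / (p + 1)) ≤
      (∫⁻ t, ENNReal.ofReal (|t| ^ p) * G t) +
        M * ENNReal.ofReal (a ^ p) * ENNReal.ofReal (2 * a) := by
  have hw : Measurable fun t : ℝ => ENNReal.ofReal (|t| ^ p) := by fun_prop
  have hwG : Measurable fun t => ENNReal.ofReal (|t| ^ p) * G t := hw.mul hG
  have pointwise (t : ℝ) : ENNReal.ofReal (a ^ p) * G t +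
      (Icc (-a) a).indicator (fun t => M * ENNReal.ofReal (|t| ^ p)) t ≤
      ENNReal.ofReal (|t| ^ p) * G t +
        (Icc (-a) a).indicator (fun _ => M * ENNReal.ofReal (a ^ p)) t := by
    by_cases ht : t ∈ Icc (-a) a
    · have hta : |t| ≤ a := abs_le.2 ht
      simp only [indicator_of_mem ht]
      rw [add_comm, mul_comm M, mul_comm M]
      exact ENNReal.mul_add_mul_le_mul_add_mul (by gcongr) (hGM t)
    · have hat : a ≤ |t| := by
        contrapose! ht
        exact abs_le.1 ht.le
      simp only [indicator_of_notMem ht, add_zero]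
      gcongr
  calc _ = ∫⁻ t, ENNReal.ofReal (a ^ p) * G t +
        (Icc (-a) a).indicator (fun t => M * ENNReal.ofReal (|t| ^ p)) t := by
        rw [lintegral_add_left (hG.const_mul _), lintegral_const_mul' _ _ ENNReal.ofReal_ne_top,
          lintegral_indicator measurableSet_Icc, lintegral_const_mul _ hw,
          lintegral_Icc_abs_rpow ha hp]
    _ ≤ ∫⁻ t, ENNReal.ofReal (|t| ^ p) * G t +
        (Icc (-a) a).indicator (fun _ => M * ENNReal.ofReal (a ^ p)) t := lintegral_mono pointwise
    _ = _ := by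
        rw [lintegral_add_left hwG, lintegral_indicator_const measurableSet_Icc,
          Real.volume_Icc, sub_neg_eq_add, ← two_mul]

theorem lintegral_eq_zero_of_lintegral_abs_rpow_mul_eq_zero {G : ℝ → ℝ≥0∞} (hG : Measurable G)
    {p : ℝ} (h : ∫⁻ t, ENNReal.ofReal (|t| ^ p) * G t = 0) : ∫⁻ t, G t = 0 := by
  rw [lintegral_eq_zero_iff (by fun_prop)] at h
  rw [lintegral_eq_zero_iff hG]
  filter_upwards [h, Measure.ae_ne volume 0] with t ht ht0
  have hw : ENNReal.ofReal (|t| ^ p) ≠ 0 :=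
    (ENNReal.ofReal_pos.2 (Real.rpow_pos_of_pos (abs_pos.2 ht0) p)).ne'
  exact (mul_eq_zero.1 ht).resolve_left hw

theorem rpow_add_one_le_of_bathtub {i j m p : ℝ} (hi : 0 < i) (hm : 0 < m) (hp : 0 < p)
    (h : ∀ a, 0 ≤ a → a ^ p * i + m * (2 * a ^ (p + 1) / (p + 1)) ≤ j + m * a ^ p * (2 * a)) :
    i ^ (p + 1) ≤ 2 ^ p * (p + 1) * m ^ p * j := by
  set a := i / (2 * m) with ha
  have ha0 : 0 < a := by positivity
  have hia : i = 2 * m * a := by rw [ha]; field_simp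
  have key := h a ha0.le
  rw [hia] at key
  have moment_bound : 2 * m * a ^ (p + 1) ≤ (p + 1) * j := by
    rw [← div_le_iff₀' (by linarith)]
    linear_combination key
  calc i ^ (p + 1) = 2 ^ p * m ^ p * (2 * m * a ^ (p + 1)) := by
        rw [hia, Real.rpow_add_one (by positivity), Real.mul_rpow (by positivity) ha0.le,
          Real.mul_rpow zero_le_two hm.le, Real.rpow_add_one ha0.ne']
        ring
    _ ≤ 2 ^ p * m ^ p * ((p + 1) * j) := by gcongr
    _ = 2 ^ p * (p + 1) * m ^ p * j := by ring

theorem lintegral_rpow_add_one_le {G : ℝ → ℝ≥0∞} (hG : Measurable G) {M : ℝ≥0∞}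
    (hGM : ∀ t, G t ≤ M) {p : ℝ} (hp : 0 < p) :
    (∫⁻ t, G t) ^ (p + 1) ≤
      ENNReal.ofReal (2 ^ p * (p + 1)) * M ^ p * ∫⁻ t, ENNReal.ofReal (|t| ^ p) * G t := by
  have bathtub a (ha : 0 ≤ a) := lintegral_bathtub hG hGM ha hp.le
  set I := ∫⁻ t, G t
  set J := ∫⁻ t, ENNReal.ofReal (|t| ^ p) * G t
  rcases eq_or_ne I 0 with hI | hI
  · rw [hI, ENNReal.zero_rpow_of_pos (by linarith)]
    exact zero_le
  have hJ : J ≠ 0 := fun hJ => hI (lintegral_eq_zero_of_lintegral_abs_rpow_mul_eq_zero hG hJ)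
  have hM : M ≠ 0 := by
    rintro rfl
    exact hI (lintegral_eq_zero_iff hG |>.2 (ae_of_all _ fun t => le_zero_iff.1 (hGM t)))
  have hC : ENNReal.ofReal (2 ^ p * (p + 1)) ≠ 0 := (ENNReal.ofReal_pos.2 (by positivity)).ne'
  rcases eq_or_ne M ∞ with rfl | hMtop
  · rw [ENNReal.top_rpow_of_pos hp, ENNReal.mul_top hC, ENNReal.top_mul hJ]
    exact le_top
  rcases eq_or_ne J ∞ with hJtop | hJtop
  · rw [hJtop, ENNReal.mul_top (mul_ne_zero hC (by simp [hM, hMtop]))]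
    exact le_top
  -- at `a = 1` the bathtub inequality bounds `∫ G` by `∫ |t|^p G + 2M`
  have hItop : I ≠ ∞ := by
    have bound := bathtub 1 zero_le_one
    simp only [Real.one_rpow, ENNReal.ofReal_one, one_mul] at bound
    exact ne_top_of_le_ne_top (by finiteness) (le_self_add.trans bound)
  have real_bound : I.toReal ^ (p + 1) ≤ 2 ^ p * (p + 1) * M.toReal ^ p * J.toReal := by
    refine rpow_add_one_le_of_bathtub (ENNReal.toReal_pos hI hItop)
      (ENNReal.toReal_pos hM hMtop) hp fun a ha => ?_
    simpa (disch := first | finiteness | positivity) only [ENNReal.toReal_add,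
      ENNReal.toReal_mul, ENNReal.toReal_ofReal] using
      ENNReal.toReal_mono (by finiteness) (bathtub a ha)
  calc I ^ (p + 1) = ENNReal.ofReal (I.toReal ^ (p + 1)) := by
        rw [← ENNReal.ofReal_rpow_of_nonneg ENNReal.toReal_nonneg (by linarith),
          ENNReal.ofReal_toReal hItop]
    _ ≤ ENNReal.ofReal (2 ^ p * (p + 1) * M.toReal ^ p * J.toReal) :=
        ENNReal.ofReal_le_ofReal real_bound
    _ = ENNReal.ofReal (2 ^ p * (p + 1)) * M ^ p * J := by
        rw [ENNReal.ofReal_mul (by positivity), ENNReal.ofReal_mul (by positivity),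
          ← ENNReal.ofReal_rpow_of_nonneg ENNReal.toReal_nonneg hp.le,
          ENNReal.ofReal_toReal hMtop, ENNReal.ofReal_toReal hJtop]

theorem volume_le_hausdorffMeasure (ι : Type*) [Fintype ι] :
    (volume : Measure (EuclideanSpace ℝ ι)) ≤ μH[Fintype.card ι] := by
  refine Measure.le_iff'.2 fun s => ?_
  have hToLp := (EuclideanSpace.volume_preserving_symm_measurableEquiv_toLp ι).symm
  calc volume s = volume (WithLp.toLp 2 ⁻¹' s) := (hToLp.measure_preimage_equiv s).symm
    _ = μH[Fintype.card ι] (WithLp.ofLp '' s) := by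
        rw [← hausdorffMeasure_pi_real]
        exact congrArg _ ((WithLp.equiv 2 (ι → ℝ)).image_eq_preimage_symm s).symm
    _ ≤ μH[Fintype.card ι] s := by
        simpa only [ENNReal.coe_one, ENNReal.one_rpow, one_mul] using
          (PiLp.lipschitzWith_ofLp 2 fun _ : ι => ℝ).hausdorffMeasure_image_le (Nat.cast_nonneg _) s

theorem Isometry.lintegral_comp_le_setLIntegral_hausdorffMeasure {ι X : Type*} [Fintype ι]
    [EMetricSpace X] [MeasurableSpace X] [BorelSpace X] {ψ : EuclideanSpace ℝ ι → X}
    (hψ : Isometry ψ) {F : X → ℝ≥0∞} (hF : Measurable F) {S : Set X} (hS : range ψ ⊆ S) :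
    ∫⁻ y, F (ψ y) ≤ ∫⁻ x in S, F x ∂μH[Fintype.card ι] := by
  rw [← lintegral_map hF hψ.continuous.measurable]
  refine lintegral_mono' ?_ le_rfl
  calc Measure.map ψ volume ≤ Measure.map ψ μH[Fintype.card ι] :=
        Measure.map_mono (volume_le_hausdorffMeasure ι) hψ.continuous.measurable
    _ = μH[Fintype.card ι].restrict (range ψ) :=
        hψ.map_hausdorffMeasure (Or.inl (Nat.cast_nonneg _))
    _ ≤ μH[Fintype.card ι].restrict S := Measure.restrict_mono hS le_rfl

theorem OrthonormalBasis.exists_apply_zero_eq {E : Type*} [NormedAddCommGroup E]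
    [InnerProductSpace ℝ E] [FiniteDimensional ℝ E] {m : ℕ} (hE : Module.finrank ℝ E = m + 1)
    {ξ : E} (hξ : ‖ξ‖ = 1) : ∃ b : OrthonormalBasis (Fin (m + 1)) ℝ E, b 0 = ξ := by
  have hon : Orthonormal ℝ (({0} : Set (Fin (m + 1))).domRestrict fun _ => ξ) := by
    rw [orthonormal_iff_ite]
    rintro ⟨i, rfl⟩ ⟨j, rfl⟩
    simp [Set.domRestrict, hξ]
  obtain ⟨b, hb⟩ := hon.exists_orthonormalBasis_extension_of_card_eq (by simpa using hE)
  exact ⟨b, hb 0 rfl⟩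

theorem exists_measurePreserving_inner_eq_fst {E : Type*} [NormedAddCommGroup E]
    [InnerProductSpace ℝ E] [FiniteDimensional ℝ E] [MeasurableSpace E] [BorelSpace E] {m : ℕ}
    (hE : Module.finrank ℝ E = m + 1) {ξ : E} (hξ : ‖ξ‖ = 1) :
    ∃ Φ : ℝ × EuclideanSpace ℝ (Fin m) → E, MeasurePreserving Φ ∧
      (∀ s y, ⟪Φ (s, y), ξ⟫ = s) ∧ ∀ s, Isometry fun y => Φ (s, y) := by
  obtain ⟨b, hb⟩ := OrthonormalBasis.exists_apply_zero_eq hE hξ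
  refine ⟨fun z => b.repr.symm (WithLp.toLp 2 (Fin.cons z.1 z.2.ofLp)), ?_, ?_, ?_⟩
  · have hcons : MeasurePreserving
        (fun z : ℝ × (Fin m → ℝ) => (Fin.cons z.1 z.2 : Fin (m + 1) → ℝ)) := by
      convert (volume_preserving_piFinSuccAbove (fun _ : Fin (m + 1) => ℝ) 0).symm using 1
      ext z i
      simp
    exact b.measurePreserving_repr_symm.comp ((PiLp.volume_preserving_toLp _).comp
      (hcons.comp ((MeasurePreserving.id volume).prod (PiLp.volume_preserving_ofLp _))))
  · intro s y
    rw [← hb, real_inner_comm, ← b.repr_apply_apply]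
    simp
  · intro s
    refine Isometry.of_dist_eq fun y y' => ?_
    rw [b.repr.symm.dist_map, EuclideanSpace.dist_eq, EuclideanSpace.dist_eq, Fin.sum_univ_succ]
    simp

theorem MeasureTheory.MeasurePreserving.lintegral_mul_comp_eq {Y E : Type*} [MeasureSpace Y]
    [SFinite (volume : Measure Y)] [MeasureSpace E] {Φ : ℝ × Y → E} (hΦ : MeasurePreserving Φ)
    {π : E → ℝ} (hπ : Measurable π) (hπΦ : ∀ s y, π (Φ (s, y)) = s) {F : E → ℝ≥0∞}
    (hF : Measurable F) {w : ℝ → ℝ≥0∞} (hw : Measurable w) :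
    ∫⁻ x, w (π x) * F x = ∫⁻ s, w s * ∫⁻ y, F (Φ (s, y)) := by
  have hΦm := hΦ.measurable
  rw [← hΦ.lintegral_comp (by fun_prop), Measure.volume_eq_prod, lintegral_prod _ (by fun_prop)]
  simp only [hπΦ]
  exact lintegral_congr fun s => lintegral_const_mul _ (by fun_prop)

theorem slicing_moment_inequality_on_set_general
    {n : ℕ} (hn : 1 ≤ n)
    (K : Set (EuclideanSpace ℝ (Fin n))) (hK : IsCompact K)
    (f : EuclideanSpace ℝ (Fin n) → ℝ)
    (hfm : Measurable f)
    (ξ : EuclideanSpace ℝ (Fin n)) (hξ : ‖ξ‖ = 1)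
    (p : ℝ) (hp : 0 < p) :
    (∫⁻ x in K, ENNReal.ofReal (f x)) ^ (p + 1) ≤
      ENNReal.ofReal (2 ^ p * (p + 1)) *
        (⨆ s : ℝ, ∫⁻ x in K ∩ {x : EuclideanSpace ℝ (Fin n) | ⟪x, ξ⟫ = s},
            ENNReal.ofReal (f x) ∂(μH[(n : ℝ) - 1])) ^ p *
        ∫⁻ x in K, ENNReal.ofReal (|⟪x, ξ⟫| ^ p * f x) := by
  obtain ⟨m, rfl⟩ : ∃ m, n = m + 1 := ⟨n - 1, by omega⟩
  rw [show ((m + 1 : ℕ) : ℝ) - 1 = Fintype.card (Fin m) by simp]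
  obtain ⟨Φ, hΦ, hΦξ, hΦiso⟩ := exists_measurePreserving_inner_eq_fst finrank_euclideanSpace_fin hξ
  have hKm : MeasurableSet K := hK.measurableSet
  set F := K.indicator fun x => ENNReal.ofReal (f x)
  have hF : Measurable F := (ENNReal.measurable_ofReal.comp hfm).indicator hKm
  have hπ : Measurable fun x : EuclideanSpace ℝ (Fin (m + 1)) => ⟪x, ξ⟫ := by fun_prop
  have fubini {w : ℝ → ℝ≥0∞} (hw : Measurable w) := hΦ.lintegral_mul_comp_eq hπ hΦξ hF hw
  have hG : Measurable fun s => ∫⁻ y, F (Φ (s, y)) :=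
    (hF.comp hΦ.measurable).lintegral_prod_right'
  have slice (s : ℝ) : ∫⁻ y, F (Φ (s, y)) ≤
      ∫⁻ x in K ∩ {x | ⟪x, ξ⟫ = s}, ENNReal.ofReal (f x) ∂μH[Fintype.card (Fin m)] := by
    rw [← setLIntegral_indicator hKm]
    exact (hΦiso s).lintegral_comp_le_setLIntegral_hausdorffMeasure hF
      (range_subset_iff.2 (hΦξ s))
  calc (∫⁻ x in K, ENNReal.ofReal (f x)) ^ (p + 1) = (∫⁻ s, ∫⁻ y, F (Φ (s, y))) ^ (p + 1) := by
        simpa [← lintegral_indicator hKm] using congrArg (· ^ (p + 1)) (fubini measurable_one)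
    _ ≤ _ := lintegral_rpow_add_one_le hG (fun s => (slice s).trans (le_iSup_of_le s le_rfl)) hp
    _ = _ := by
        rw [← fubini (by fun_prop), ← lintegral_indicator hKm]
        congr 1
        refine lintegral_congr fun x => ?_
        by_cases hx : x ∈ K <;> simp [F, hx, ENNReal.ofReal_mul, Real.rpow_nonneg]

/-- For a compact `K ⊆ ℝⁿ`, nonnegative Borel measurable integrable
`f` on `K`, a unit vector `ξ` and `p > 0`,
`(∫_K f)^(p+1) ≤ 2^p (p+1) (sup_s ∫_{K∩{⟨x,ξ⟩=s}} f)^p ∫_K |⟨x,ξ⟩|^p f(x) dx`,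
sections being measured by `(n-1)`-dimensional Hausdorff (Lebesgue) measure. -/
theorem slicing_moment_inequality_on_set
    {n : ℕ} (hn : 1 ≤ n)
    (K : Set (EuclideanSpace ℝ (Fin n))) (hK : IsCompact K)
    (f : EuclideanSpace ℝ (Fin n) → ℝ)
    (hfm : Measurable f) (hf0 : ∀ x, 0 ≤ f x) (hfint : IntegrableOn f K)
    (ξ : EuclideanSpace ℝ (Fin n)) (hξ : ‖ξ‖ = 1)
    (p : ℝ) (hp : 0 < p) :
    (∫⁻ x in K, ENNReal.ofReal (f x)) ^ (p + 1) ≤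
      ENNReal.ofReal (2 ^ p * (p + 1)) *
        (⨆ s : ℝ, ∫⁻ x in K ∩ {x : EuclideanSpace ℝ (Fin n) | ⟪x, ξ⟫ = s},
            ENNReal.ofReal (f x) ∂(μH[(n : ℝ) - 1])) ^ p *
        ∫⁻ x in K, ENNReal.ofReal (|⟪x, ξ⟫| ^ p * f x) :=
  slicing_moment_inequality_on_set_general hn K hK f hfm ξ hξ p hp
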